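/- Let A be a commutative Hopf algebra over a field k, and let B be a Hopf algebra over k together with a coaction β : B → B ⊗ A making B a right A-comodule algebra and a right A-comodule coalgebra. Then A ⊗ B, with the tensor product algebra structure and the cross coproduct Δ(a ⊗ b) = (a₍₁₎ ⊗ b₍₁₎⁽⁰⁾) ⊗ (a₍₂₎ b₍₁₎⁽¹⁾ ⊗ b₍₂₎) and counit ε(a⊗b) = ε(a)ε(b), is a bialgebra (that is, Δ and ε are algebra maps). -/
import Mathlib


/- Statement 10: prebosonisation. A a commutative Hopf algebra, B a Hopf algebra with a
coaction β : B → B ⊗ A making B a right A-comodule algebra and comodule coalgebra. Then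
A ⊗ B with the tensor product algebra structure and the cross coproduct
Δ(a ⊗ b) = (a₍₁₎ ⊗ b₍₁₎⁽⁰⁾) ⊗ (a₍₂₎ b₍₁₎⁽¹⁾ ⊗ b₍₂₎) is a bialgebra (Δ and ε are algebra maps). -/

open TensorProduct

variable (k A B : Type*) [CommRing k] [CommRing A] [HopfAlgebra k A]
  [Ring B] [HopfAlgebra k B]

/-- The cross coproduct on `A ⊗ B` determined by a coaction `β : B →ₗ B ⊗ A`. -/
noncomputable def crossComulX (β : B →ₗ[k] B ⊗[k] A) :
    A ⊗[k] B →ₗ[k] (A ⊗[k] B) ⊗[k] (A ⊗[k] B) :=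
  (TensorProduct.map LinearMap.id (TensorProduct.map
      ((LinearMap.mul' k A) ∘ₗ (TensorProduct.comm k A A).toLinearMap) LinearMap.id)) ∘ₗ
  (TensorProduct.map LinearMap.id (TensorProduct.assoc k A A B).symm.toLinearMap) ∘ₗ
  (TensorProduct.assoc k (A ⊗[k] B) A (A ⊗[k] B)).toLinearMap ∘ₗ
  (TensorProduct.map (TensorProduct.assoc k A B A).symm.toLinearMap LinearMap.id) ∘ₗ
  (TensorProduct.tensorTensorTensorComm k A A (B ⊗[k] A) B).toLinearMap ∘ₗ
  (TensorProduct.map LinearMap.id (TensorProduct.map β LinearMap.id)) ∘ₗ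
  (TensorProduct.map Coalgebra.comul Coalgebra.comul)

/-- The tensor product counit on `A ⊗ B`. -/
noncomputable def tensorCounitAB : A ⊗[k] B →ₗ[k] k :=
  (TensorProduct.lid k k).toLinearMap ∘ₗ
  (TensorProduct.map Coalgebra.counit Coalgebra.counit)

/-- Tail of the cross coproduct after applying `comul ⊗ comul` and `id ⊗ (β ⊗ id)`. -/
noncomputable def preBosT :
    (A ⊗[k] A) ⊗[k] ((B ⊗[k] A) ⊗[k] B) →ₗ[k] (A ⊗[k] B) ⊗[k] (A ⊗[k] B) :=
  (TensorProduct.map LinearMap.id (TensorProduct.map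
      ((LinearMap.mul' k A) ∘ₗ (TensorProduct.comm k A A).toLinearMap) LinearMap.id)) ∘ₗ
  (TensorProduct.map LinearMap.id (TensorProduct.assoc k A A B).symm.toLinearMap) ∘ₗ
  (TensorProduct.assoc k (A ⊗[k] B) A (A ⊗[k] B)).toLinearMap ∘ₗ
  (TensorProduct.map (TensorProduct.assoc k A B A).symm.toLinearMap LinearMap.id) ∘ₗ
  (TensorProduct.tensorTensorTensorComm k A A (B ⊗[k] A) B).toLinearMap

noncomputable def preBosP :
    ((A ⊗[k] B) ⊗[k] (A ⊗[k] B)) ⊗[k] ((A ⊗[k] B) ⊗[k] (A ⊗[k] B)) →ₗ[k]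
      (A ⊗[k] B) ⊗[k] (A ⊗[k] B) :=
  (TensorProduct.map (LinearMap.mul' k (A ⊗[k] B)) (LinearMap.mul' k (A ⊗[k] B))) ∘ₗ
  (TensorProduct.tensorTensorTensorComm k (A ⊗[k] B) (A ⊗[k] B)
      (A ⊗[k] B) (A ⊗[k] B)).toLinearMap

lemma preBosT_tmul (p q : A) (r : B) (c : A) (s : B) :
    preBosT k A B ((p ⊗ₜ[k] q) ⊗ₜ[k] ((r ⊗ₜ[k] c) ⊗ₜ[k] s))
      = (p ⊗ₜ[k] r) ⊗ₜ[k] ((q * c) ⊗ₜ[k] s) := by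
  simp [preBosT, TensorProduct.tensorTensorTensorComm_tmul, TensorProduct.assoc_symm_tmul,
    TensorProduct.assoc_tmul, LinearMap.mul'_apply]

lemma preBosP_tmul (x y x' y' : A ⊗[k] B) :
    preBosP k A B ((x ⊗ₜ[k] y) ⊗ₜ[k] (x' ⊗ₜ[k] y')) = (x * x') ⊗ₜ[k] (y * y') := by
  simp [preBosP, TensorProduct.tensorTensorTensorComm_tmul, LinearMap.mul'_apply]

lemma preBos_key1 (x x' : A ⊗[k] A) (u u' : B ⊗[k] A) (w w' : B) :
    preBosT k A B ((x * x') ⊗ₜ[k] ((u * u') ⊗ₜ[k] (w * w')))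
      = preBosP k A B (preBosT k A B (x ⊗ₜ[k] (u ⊗ₜ[k] w)) ⊗ₜ[k]
          preBosT k A B (x' ⊗ₜ[k] (u' ⊗ₜ[k] w'))) := by
  induction x using TensorProduct.induction_on with
  | zero => simp only [zero_mul, TensorProduct.zero_tmul, TensorProduct.tmul_zero,
      LinearMap.map_zero]
  | add y z hy hz => simp only [add_mul, TensorProduct.add_tmul, TensorProduct.tmul_add,
      LinearMap.map_add, hy, hz]
  | tmul a1 a2 =>
  induction x' using TensorProduct.induction_on with
  | zero => simp only [mul_zero, TensorProduct.zero_tmul, TensorProduct.tmul_zero,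
      LinearMap.map_zero]
  | add y z hy hz => simp only [mul_add, TensorProduct.add_tmul, TensorProduct.tmul_add,
      LinearMap.map_add, hy, hz]
  | tmul a1' a2' =>
  induction u using TensorProduct.induction_on with
  | zero => simp only [zero_mul, TensorProduct.zero_tmul, TensorProduct.tmul_zero,
      LinearMap.map_zero]
  | add y z hy hz => simp only [add_mul, TensorProduct.add_tmul, TensorProduct.tmul_add,
      LinearMap.map_add, hy, hz]
  | tmul b0 c =>
  induction u' using TensorProduct.induction_on with
  | zero => simp only [mul_zero, TensorProduct.zero_tmul, TensorProduct.tmul_zero,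
      LinearMap.map_zero]
  | add y z hy hz => simp only [mul_add, TensorProduct.add_tmul, TensorProduct.tmul_add,
      LinearMap.map_add, hy, hz]
  | tmul b0' c' =>
  simp only [Algebra.TensorProduct.tmul_mul_tmul, preBosT_tmul, preBosP_tmul]
  congr 2
  ring

lemma preBos_key2 (β : B →ₗ[k] B ⊗[k] A)
    (halg : β ∘ₗ LinearMap.mul' k B
      = LinearMap.mul' k (B ⊗[k] A) ∘ₗ TensorProduct.map β β)
    (x x' : A ⊗[k] A) (y y' : B ⊗[k] B) :
    (preBosT k A B ∘ₗ TensorProduct.map LinearMap.id (TensorProduct.map β LinearMap.id))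
        ((x * x') ⊗ₜ[k] (y * y'))
      = preBosP k A B
          ((preBosT k A B ∘ₗ TensorProduct.map LinearMap.id
              (TensorProduct.map β LinearMap.id)) (x ⊗ₜ[k] y) ⊗ₜ[k]
           (preBosT k A B ∘ₗ TensorProduct.map LinearMap.id
              (TensorProduct.map β LinearMap.id)) (x' ⊗ₜ[k] y')) := by
  have hβ : ∀ b b' : B, β (b * b') = β b * β b' := by
    intro b b'
    have := LinearMap.congr_fun halg (b ⊗ₜ[k] b')
    simpa only [LinearMap.comp_apply, LinearMap.mul'_apply, TensorProduct.map_tmul] using this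
  induction y using TensorProduct.induction_on with
  | zero => simp only [zero_mul, TensorProduct.zero_tmul, TensorProduct.tmul_zero,
      LinearMap.map_zero]
  | add y z hy hz => simp only [add_mul, TensorProduct.add_tmul, TensorProduct.tmul_add,
      LinearMap.map_add, hy, hz]
  | tmul b1 w =>
  induction y' using TensorProduct.induction_on with
  | zero => simp only [mul_zero, TensorProduct.zero_tmul, TensorProduct.tmul_zero,
      LinearMap.map_zero]
  | add y z hy hz => simp only [mul_add, TensorProduct.add_tmul, TensorProduct.tmul_add,
      LinearMap.map_add, hy, hz]
  | tmul b1' w' =>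
  simp only [LinearMap.comp_apply, Algebra.TensorProduct.tmul_mul_tmul,
    TensorProduct.map_tmul, LinearMap.id_coe, id_eq, hβ]
  exact preBos_key1 k A B x x' (β b1) (β b1') w w'

lemma crossComulX_eq (β : B →ₗ[k] B ⊗[k] A) :
    crossComulX k A B β
      = (preBosT k A B ∘ₗ TensorProduct.map LinearMap.id (TensorProduct.map β LinearMap.id))
          ∘ₗ (TensorProduct.map Coalgebra.comul Coalgebra.comul) := rfl

theorem prebosonisation_bialgebra (β : B →ₗ[k] B ⊗[k] A)
    -- β is coassociative
    (hcoassoc : (TensorProduct.assoc k B A A).toLinearMap ∘ₗ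
        (TensorProduct.map β LinearMap.id) ∘ₗ β
      = (TensorProduct.map LinearMap.id Coalgebra.comul) ∘ₗ β)
    -- β is counital
    (hcounit : (TensorProduct.rid k B).toLinearMap ∘ₗ
        (TensorProduct.map LinearMap.id Coalgebra.counit) ∘ₗ β = LinearMap.id)
    -- B is a comodule algebra: β is an algebra map
    (halg : β ∘ₗ LinearMap.mul' k B
      = LinearMap.mul' k (B ⊗[k] A) ∘ₗ TensorProduct.map β β)
    (hone : β (1 : B) = (1 : B ⊗[k] A))
    -- B is a comodule coalgebra
    (hcoalg : (TensorProduct.map Coalgebra.comul LinearMap.id) ∘ₗ β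
      = (TensorProduct.map LinearMap.id (LinearMap.mul' k A)) ∘ₗ
        (TensorProduct.tensorTensorTensorComm k B A B A).toLinearMap ∘ₗ
        (TensorProduct.map β β) ∘ₗ Coalgebra.comul)
    (hcoeps : (TensorProduct.lid k A).toLinearMap ∘ₗ
        (TensorProduct.map Coalgebra.counit LinearMap.id) ∘ₗ β
      = Algebra.linearMap k A ∘ₗ Coalgebra.counit) :
    -- the cross coproduct is an algebra map for the tensor product algebra on A ⊗ B
    (crossComulX k A B β ∘ₗ LinearMap.mul' k (A ⊗[k] B)
      = (TensorProduct.map (LinearMap.mul' k (A ⊗[k] B)) (LinearMap.mul' k (A ⊗[k] B))) ∘ₗ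
        (TensorProduct.tensorTensorTensorComm k (A ⊗[k] B) (A ⊗[k] B)
            (A ⊗[k] B) (A ⊗[k] B)).toLinearMap ∘ₗ
        TensorProduct.map (crossComulX k A B β) (crossComulX k A B β)) ∧
    (crossComulX k A B β ((1 : A) ⊗ₜ[k] (1 : B))
      = ((1 : A) ⊗ₜ[k] (1 : B)) ⊗ₜ[k] ((1 : A) ⊗ₜ[k] (1 : B))) ∧
    -- the counit is an algebra map
    (tensorCounitAB k A B ∘ₗ LinearMap.mul' k (A ⊗[k] B)
      = (TensorProduct.lid k k).toLinearMap ∘ₗ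
        TensorProduct.map (tensorCounitAB k A B) (tensorCounitAB k A B)) ∧
    (tensorCounitAB k A B ((1 : A) ⊗ₜ[k] (1 : B)) = 1) := by
  constructor
  · -- Δ is multiplicative
    ext a b a' b'
    have h := preBos_key2 k A B β halg (Coalgebra.comul a) (Coalgebra.comul a')
      (Coalgebra.comul b) (Coalgebra.comul b')
    simp only [LinearMap.comp_apply, AlgebraTensorModule.curry_apply, curry_apply,
      LinearMap.coe_restrictScalars, LinearMap.mul'_apply,
      Algebra.TensorProduct.tmul_mul_tmul, TensorProduct.map_tmul,
      LinearEquiv.coe_coe, LinearMap.id_coe, id_eq, preBosP] at h ⊢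
    rw [crossComulX_eq]
    simp only [LinearMap.comp_apply, TensorProduct.map_tmul, Bialgebra.comul_mul,
      LinearMap.id_coe, id_eq]
    exact h
  refine ⟨?_, ?_, ?_⟩
  · -- Δ(1) = 1 ⊗ 1
    rw [crossComulX_eq]
    simp only [LinearMap.comp_apply, TensorProduct.map_tmul, Bialgebra.comul_one,
      Algebra.TensorProduct.one_def, hone]
    simp [preBosT_tmul]
  · -- ε is multiplicative
    ext a b a' b'
    simp only [LinearMap.comp_apply, AlgebraTensorModule.curry_apply, curry_apply,
      LinearMap.coe_restrictScalars, LinearMap.mul'_apply,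
      Algebra.TensorProduct.tmul_mul_tmul, TensorProduct.map_tmul, LinearEquiv.coe_coe,
      tensorCounitAB, Bialgebra.counit_mul, TensorProduct.lid_tmul, smul_eq_mul]
    ring
  · simp [tensorCounitAB]
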